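/- Let Π and Ξ be two mutually unbiased orthonormal bases of a d-dimensional Hilbert space. Then the functional W_u(ρ) = H(Δ_Ξ(ρ)) − log₂ d is a coherence witness with respect to Π: (i) W_u(σ) = 0 for every state σ that is diagonal in the basis Π, and (ii) there exists a state ρ (namely any element of Ξ) with W_u(ρ) = −log₂ d < 0. -/

import Mathlib

open scoped BigOperators
open Real

/-- entropy (base 2) of the state dephased in the orthonormal basis `v`,
i.e. the Shannon entropy of the outcome probabilities `⟨v i|ρ|v i⟩`.
(The dephased state `Δ_Ξ(ρ) = Σ_i |v i⟩⟨v i| ρ |v i⟩⟨v i|` is diagonal in the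
basis `v` with these diagonal entries, so this is its von Neumann entropy.) -/
noncomputable def dephasedEntropy {d : ℕ} (v : Fin d → Fin d → ℂ)
    (ρ : Matrix (Fin d) (Fin d) ℂ) : ℝ :=
  -∑ i, (dotProduct (star (v i)) (ρ.mulVec (v i))).re *
      Real.logb 2 (dotProduct (star (v i)) (ρ.mulVec (v i))).re

/-- a family of vectors is an orthonormal basis -/
def IsONB {d : ℕ} (v : Fin d → Fin d → ℂ) : Prop :=
  ∀ i j, dotProduct (star (v i)) (v j) = if i = j then 1 else 0

/-- two bases are mutually unbiased -/
def IsMUB {d : ℕ} (v w : Fin d → Fin d → ℂ) : Prop :=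
  ∀ i j, ‖dotProduct (star (v i)) (w j)‖ ^ 2 = 1 / d

/-!
Measured in `Ξ`, a state `Σ_i p_i |π_i⟩⟨π_i|` has outcome probabilities
`Σ_i p_i |⟨π_i|ξ_k⟩|² = 1/d`, so its dephasing is maximally mixed, of entropy `log₂ d`.
A basis state `|ξ_j⟩⟨ξ_j|` is unchanged by dephasing in `Ξ` and, being pure, has entropy `0`.
-/

open Matrix

theorem star_dotProduct_vecMulVec_self_mulVec {𝕜 n : Type*} [RCLike 𝕜] [Fintype n]
    (a c : n → 𝕜) :
    star c ⬝ᵥ (vecMulVec a (star a) *ᵥ c) = ((‖star a ⬝ᵥ c‖ ^ 2 : ℝ) : 𝕜) := by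
  rw [vecMulVec_mulVec, op_smul_eq_smul, dotProduct_smul, star_dotProduct c a, smul_eq_mul,
    RCLike.star_def, RCLike.mul_conj, RCLike.ofReal_pow]

theorem dephasedEntropy_eq_logb_of_uniform {d : ℕ} (v : Fin d → Fin d → ℂ)
    (ρ : Matrix (Fin d) (Fin d) ℂ) (h : ∀ k, (star (v k) ⬝ᵥ (ρ *ᵥ v k)).re = 1 / d) :
    dephasedEntropy v ρ = Real.logb 2 d := by
  rcases Nat.eq_zero_or_pos d with rfl | hd
  · simp [dephasedEntropy]
  have hd0 : (d : ℝ) ≠ 0 := (Nat.cast_pos.mpr hd).ne'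
  simp only [dephasedEntropy, h, Finset.sum_const, Finset.card_univ, Fintype.card_fin,
    nsmul_eq_mul, one_div, Real.logb_inv]
  field_simp

theorem dephasedEntropy_vecMulVec_self {d : ℕ} {v : Fin d → Fin d → ℂ} (hv : IsONB v)
    (j : Fin d) : dephasedEntropy v (vecMulVec (v j) (star (v j))) = 0 := by
  have hprob : ∀ k, (star (v k) ⬝ᵥ (vecMulVec (v j) (star (v j)) *ᵥ v k)).re =
      if k = j then 1 else 0 := by
    intro k
    rw [star_dotProduct_vecMulVec_self_mulVec, hv j k]
    by_cases hkj : k = j <;> simp [hkj, Ne.symm]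
  simp [dephasedEntropy, hprob]

theorem re_star_dotProduct_incoherent_mulVec_of_isMUB {d : ℕ} {Pi Ξ : Fin d → Fin d → ℂ}
    (hMUB : IsMUB Pi Ξ) {p : Fin d → ℝ} (hp : ∑ i, p i = 1) (k : Fin d) :
    (star (Ξ k) ⬝ᵥ
      ((∑ i, ((p i : ℂ) • vecMulVec (Pi i) (star (Pi i)))) *ᵥ Ξ k)).re = 1 / d := by
  unfold IsMUB at hMUB
  simp only [sum_mulVec, dotProduct_sum, smul_mulVec, dotProduct_smul, smul_eq_mul,
    star_dotProduct_vecMulVec_self_mulVec, hMUB, Complex.re_sum, Complex.re_ofReal_mul]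
  simp [← Finset.sum_mul, hp]

theorem stmt1_general {d : ℕ} (hd : 2 ≤ d) (Pi Ξ : Fin d → Fin d → ℂ)
    (hΞ : IsONB Ξ) (hMUB : IsMUB Pi Ξ) :
    (∀ p : Fin d → ℝ, (∀ i, 0 ≤ p i) → ∑ i, p i = 1 →
      dephasedEntropy Ξ (∑ i, ((p i : ℂ) • Matrix.vecMulVec (Pi i) (star (Pi i))))
        - Real.logb 2 d = 0) ∧
    (∀ j : Fin d,
      dephasedEntropy Ξ (Matrix.vecMulVec (Ξ j) (star (Ξ j))) - Real.logb 2 d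
        = -Real.logb 2 d ∧ -Real.logb 2 d < 0) := by
  refine ⟨fun p _ hp => ?_, fun j => ⟨?_, ?_⟩⟩
  · rw [dephasedEntropy_eq_logb_of_uniform _ _
      (re_star_dotProduct_incoherent_mulVec_of_isMUB hMUB hp), sub_self]
  · rw [dephasedEntropy_vecMulVec_self hΞ, zero_sub]
  · exact neg_neg_of_pos (Real.logb_pos one_lt_two (by exact_mod_cast hd))

/-- for mutually unbiased orthonormal bases `Π` and `Ξ` of a
`d`-dimensional space (`d ≥ 2`), `W_u(ρ) = H(Δ_Ξ(ρ)) - log₂ d` is a coherence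
witness w.r.t. `Π`: it vanishes on every state diagonal in `Π`, and takes the
value `-log₂ d < 0` on every basis state of `Ξ`. -/
theorem stmt1 {d : ℕ} (hd : 2 ≤ d) (Pi Ξ : Fin d → Fin d → ℂ)
    (hPi : IsONB Pi) (hΞ : IsONB Ξ) (hMUB : IsMUB Pi Ξ) :
    (∀ p : Fin d → ℝ, (∀ i, 0 ≤ p i) → ∑ i, p i = 1 →
      dephasedEntropy Ξ (∑ i, ((p i : ℂ) • Matrix.vecMulVec (Pi i) (star (Pi i))))
        - Real.logb 2 d = 0) ∧
    (∀ j : Fin d,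
      dephasedEntropy Ξ (Matrix.vecMulVec (Ξ j) (star (Ξ j))) - Real.logb 2 d
        = -Real.logb 2 d ∧ -Real.logb 2 d < 0) :=
  stmt1_general hd Pi Ξ hΞ hMUB
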